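/- arXiv:1009.4272 — 3 statements merged into one kernel-verified Lean document; each statement's English description precedes it below -/
import Mathlib

section
/- The sum (1/(4k)) · Σ_{j=1}^{k-1} csc²(πj/k) equals (k²−1)/(12k) for every integer k ≥ 2. -/
open Real Finset

namespace DedekindAux

lemma sum_id (n : ℕ) : ∑ m ∈ Finset.range n, (m : ℂ) = n * (n - 1) / 2 := by
  induction n with
  | zero => simp
  | succ n ih => rw [Finset.sum_range_succ, ih]; push_cast; ring

lemma sum_sq (n : ℕ) : ∑ m ∈ Finset.range n, (m : ℂ) ^ 2 = n * (n - 1) * (2 * n - 1) / 6 := by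
  induction n with
  | zero => simp
  | succ n ih => rw [Finset.sum_range_succ, ih]; push_cast; ring

lemma zeta_pow_eq_one_iff (k : ℕ) (hk : 0 < k) (r : ℕ) :
    Complex.exp (2 * π * Complex.I / k) ^ r = 1 ↔ k ∣ r := by
  rw [← Complex.exp_nat_mul, Complex.exp_eq_one_iff]
  have hk' : (k : ℂ) ≠ 0 := Nat.cast_ne_zero.mpr hk.ne'
  have hpi : (π : ℂ) ≠ 0 := Complex.ofReal_ne_zero.mpr Real.pi_ne_zero
  constructor
  · rintro ⟨n, hn⟩
    have h : (r : ℂ) = n * k := by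
      field_simp at hn
      have h2 : (2 : ℂ) * π * Complex.I ≠ 0 := by
        simp [hpi, Complex.I_ne_zero]
      exact mul_right_cancel₀ h2
        (show (r : ℂ) * (2 * π * Complex.I) = (n * k) * (2 * π * Complex.I) by
          linear_combination (2 * π * Complex.I) * hn)
    have h' : (r : ℤ) = n * k := by exact_mod_cast h
    exact Int.natCast_dvd_natCast.mp ⟨n, by linarith⟩
  · rintro ⟨t, rfl⟩
    exact ⟨t, by field_simp; push_cast; ring⟩

lemma geo (k : ℕ) (hk : 0 < k) (r : ℕ) :
    ∑ j ∈ Finset.Ico 1 k, (Complex.exp (2 * π * Complex.I / k)) ^ (j * r)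
      = (if k ∣ r then (k : ℂ) else 0) - 1 := by
  set ζ := Complex.exp (2 * π * Complex.I / k) with hζ
  have hrange : ∑ j ∈ Finset.range k, (ζ ^ r) ^ j = if k ∣ r then (k : ℂ) else 0 := by
    split_ifs with hd
    · rw [(zeta_pow_eq_one_iff k hk r).mpr hd]; simp
    · have hne : ζ ^ r ≠ 1 := fun h => hd ((zeta_pow_eq_one_iff k hk r).mp h)
      rw [geom_sum_eq hne]
      have : (ζ ^ r) ^ k = 1 := by
        rw [← pow_mul, mul_comm r k, pow_mul, (zeta_pow_eq_one_iff k hk k).mpr dvd_rfl,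
          one_pow]
      rw [this]; simp
  have h0 : ∑ j ∈ Finset.range k, (ζ ^ r) ^ j
      = (ζ ^ r) ^ 0 + ∑ j ∈ Finset.Ico 1 k, (ζ ^ r) ^ j := by
    rw [Finset.range_eq_Ico, Finset.sum_eq_sum_Ico_succ_bot hk]
  have : ∀ j, (ζ ^ r) ^ j = ζ ^ (j * r) := fun j => by
    rw [← pow_mul, mul_comm]
  simp only [this] at h0 hrange
  rw [h0] at hrange
  simp only [Nat.zero_mul, pow_zero] at hrange
  linear_combination hrange

lemma telescope (z : ℂ) (n : ℕ) :
    (1 - z) * ∑ m ∈ Finset.range n, (m : ℂ) * z ^ m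
      = (∑ m ∈ Finset.range n, z ^ m) - 1 - ((n : ℂ) - 1) * z ^ n := by
  induction n with
  | zero => simp
  | succ n ih =>
    rw [Finset.sum_range_succ, Finset.sum_range_succ (f := fun m => z ^ m)]
    push_cast
    ring_nf
    ring_nf at ih
    linear_combination ih

lemma csc_eq (k j : ℕ) (h1 : 1 ≤ j) (h2 : j < k) :
    (((Real.sin (π * j / k))⁻¹ : ℝ) : ℂ) ^ 2
      = 4 * (1 - Complex.exp (2 * π * Complex.I / k) ^ j)⁻¹
        - 4 * ((1 - Complex.exp (2 * π * Complex.I / k) ^ j)⁻¹) ^ 2 := by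
  have hk : 0 < k := lt_trans (by omega) h2
  set z := Complex.exp (2 * π * Complex.I / k) ^ j with hzdef
  have hz1 : z ≠ 1 := by
    rw [hzdef, Ne, zeta_pow_eq_one_iff k hk j]
    intro hd
    exact absurd (Nat.le_of_dvd (by omega) hd) (by omega)
  set w : ℂ := Complex.exp ((π * j / k : ℝ) * Complex.I) with hwdef
  have hw0 : w ≠ 0 := Complex.exp_ne_zero _
  have hzw : z = w ^ 2 := by
    rw [hzdef, hwdef, ← Complex.exp_nat_mul, ← Complex.exp_nat_mul]
    congr 1
    push_cast
    have hk0 : (k : ℂ) ≠ 0 := Nat.cast_ne_zero.mpr hk.ne'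
    field_simp
  have hsin : ((Real.sin (π * j / k) : ℝ) : ℂ) = (w⁻¹ - w) * Complex.I / 2 := by
    rw [Complex.ofReal_sin]
    simp only [Complex.sin, hwdef, ← Complex.exp_neg]
    ring_nf
  have hw2 : 1 - w ^ 2 ≠ 0 := by
    intro h
    apply hz1
    rw [hzw]
    linear_combination -h
  have hwd : w⁻¹ - w = (1 - w ^ 2) / w := by field_simp
  rw [Complex.ofReal_inv, hsin, hzw, hwd]
  rw [div_mul_eq_mul_div, div_div, inv_div, div_pow,
    show ((1 - w ^ 2) * Complex.I) ^ 2 = (1 - w ^ 2) ^ 2 * -1 by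
      rw [mul_pow, Complex.I_sq]]
  rw [div_eq_iff (by simp [hw2] : (1 - w ^ 2) ^ 2 * (-1 : ℂ) ≠ 0)]
  field_simp
  ring

lemma main_c (k : ℕ) (hk : 2 ≤ k) :
    ∑ j ∈ Finset.Ico 1 k, (((Real.sin (π * j / k))⁻¹ : ℝ) : ℂ) ^ 2
      = ((k : ℂ) ^ 2 - 1) / 3 := by
  have hk0 : 0 < k := by omega
  have hkc : (k : ℂ) ≠ 0 := Nat.cast_ne_zero.mpr hk0.ne'
  set ζ := Complex.exp (2 * π * Complex.I / k) with hζ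
  -- inverse formula
  have hinv : ∀ j ∈ Finset.Ico 1 k,
      (1 - ζ ^ j)⁻¹ = -(∑ m ∈ Finset.range k, (m : ℂ) * ζ ^ (j * m)) / k := by
    intro j hj
    rw [Finset.mem_Ico] at hj
    have hz1 : ζ ^ j ≠ 1 := by
      rw [hζ, Ne, zeta_pow_eq_one_iff k hk0 j]
      intro hd; exact absurd (Nat.le_of_dvd (by omega) hd) (by omega)
    have hzk : (ζ ^ j) ^ k = 1 := by
      rw [← pow_mul, mul_comm j k, pow_mul, (zeta_pow_eq_one_iff k hk0 k).mpr dvd_rfl, one_pow]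
    have ht := telescope (ζ ^ j) k
    rw [geom_sum_eq hz1, hzk] at ht
    simp only [← pow_mul] at ht
    have h1z : (1 : ℂ) - ζ ^ j ≠ 0 := sub_ne_zero.mpr (Ne.symm hz1)
    field_simp
    linear_combination ht
  -- per-term formula
  have hterm : ∀ j ∈ Finset.Ico 1 k, (((Real.sin (π * j / k))⁻¹ : ℝ) : ℂ) ^ 2
      = (-4 / k) * (∑ m ∈ Finset.range k, (m : ℂ) * ζ ^ (j * m))
        - (4 / (k : ℂ) ^ 2) * (∑ m ∈ Finset.range k, (m : ℂ) * ζ ^ (j * m)) ^ 2 := by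
    intro j hj
    have hj' := Finset.mem_Ico.mp hj
    rw [csc_eq k j hj'.1 hj'.2, ← hζ, hinv j hj]
    ring
  rw [Finset.sum_congr rfl hterm, Finset.sum_sub_distrib, ← Finset.mul_sum, ← Finset.mul_sum]
  -- first moment sum
  have hS1 : ∑ j ∈ Finset.Ico 1 k, ∑ m ∈ Finset.range k, (m : ℂ) * ζ ^ (j * m)
      = -((k : ℂ) * (k - 1) / 2) := by
    rw [Finset.sum_comm]
    have h1 : ∀ m ∈ Finset.range k, ∑ j ∈ Finset.Ico 1 k, (m : ℂ) * ζ ^ (j * m)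
        = -(m : ℂ) := by
      intro m hm
      rw [← Finset.mul_sum, geo k hk0 m]
      rcases Nat.eq_zero_or_pos m with rfl | hm1
      · simp
      · rw [if_neg (fun hd => absurd (Nat.le_of_dvd hm1 hd)
          (not_le.mpr (Finset.mem_range.mp hm)))]
        ring
    rw [Finset.sum_congr rfl h1, Finset.sum_neg_distrib, sum_id k]
  -- second moment sum
  have hS2 : ∑ j ∈ Finset.Ico 1 k, (∑ m ∈ Finset.range k, (m : ℂ) * ζ ^ (j * m)) ^ 2
      = (k : ℂ) * ((k : ℂ) * ((k : ℂ) * (k - 1) / 2) - (k : ℂ) * (k - 1) * (2 * k - 1) / 6)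
        - ((k : ℂ) * (k - 1) / 2) ^ 2 := by
    have expand : ∀ j : ℕ, (∑ m ∈ Finset.range k, (m : ℂ) * ζ ^ (j * m)) ^ 2
        = ∑ m ∈ Finset.range k, ∑ n ∈ Finset.range k,
            (m : ℂ) * n * ζ ^ (j * (m + n)) := by
      intro j
      rw [sq, Finset.sum_mul_sum]
      refine Finset.sum_congr rfl fun m hm => Finset.sum_congr rfl fun n hn => ?_
      rw [mul_add, pow_add]; ring
    simp only [expand]
    rw [Finset.sum_comm]
    have h2 : ∀ m ∈ Finset.range k,
        ∑ j ∈ Finset.Ico 1 k, ∑ n ∈ Finset.range k, (m : ℂ) * n * ζ ^ (j * (m + n))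
        = (k : ℂ) * ((m : ℂ) * ((k : ℂ) - m)) - (m : ℂ) * ((k : ℂ) * (k - 1) / 2) := by
      intro m hm
      rw [Finset.mem_range] at hm
      rw [Finset.sum_comm]
      have h3 : ∀ n ∈ Finset.range k, ∑ j ∈ Finset.Ico 1 k, (m : ℂ) * n * ζ ^ (j * (m + n))
          = (k : ℂ) * (if k ∣ (m + n) then (m : ℂ) * n else 0) - (m : ℂ) * n := by
        intro n hn
        rw [← Finset.mul_sum, geo k hk0 (m + n)]
        split_ifs <;> ring
      rw [Finset.sum_congr rfl h3, Finset.sum_sub_distrib, ← Finset.mul_sum]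
      have h4 : ∑ n ∈ Finset.range k, (if k ∣ (m + n) then (m : ℂ) * n else 0)
          = (m : ℂ) * ((k : ℂ) - m) := by
        rcases Nat.eq_zero_or_pos m with rfl | hm1
        · simp
        · rw [Finset.sum_eq_single (k - m)]
          · rw [if_pos (by rw [Nat.add_sub_cancel' (le_of_lt hm)])]
            rw [Nat.cast_sub (le_of_lt hm)]
          · intro n hn hne
            rw [Finset.mem_range] at hn
            rw [if_neg]
            rintro ⟨t, ht⟩
            have ht2 : t < 2 := by
              by_contra hge
              push_neg at hge
              have h2k : 2 * k ≤ k * t := by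
                calc 2 * k = k * 2 := by ring
                _ ≤ k * t := Nat.mul_le_mul_left k hge
              omega
            interval_cases t <;> omega
          · intro h
            exact absurd (Finset.mem_range.mpr (by omega)) h
      rw [h4]
      have h5 : ∑ n ∈ Finset.range k, (m : ℂ) * n = (m : ℂ) * ((k : ℂ) * (k - 1) / 2) := by
        rw [← Finset.mul_sum, sum_id k]
      rw [h5]
    rw [Finset.sum_congr rfl h2, Finset.sum_sub_distrib, ← Finset.mul_sum, ← Finset.sum_mul]
    have h6 : ∑ m ∈ Finset.range k, (m : ℂ) * ((k : ℂ) - m)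
        = (k : ℂ) * ((k : ℂ) * (k - 1) / 2) - (k : ℂ) * (k - 1) * (2 * k - 1) / 6 := by
      have : ∀ m ∈ Finset.range k, (m : ℂ) * ((k : ℂ) - m) = (k : ℂ) * m - (m : ℂ) ^ 2 :=
        fun m hm => by ring
      rw [Finset.sum_congr rfl this, Finset.sum_sub_distrib, ← Finset.mul_sum, sum_id k,
        sum_sq k]
    rw [h6, sum_id k]
    ring
  rw [hS1, hS2]
  field_simp
  ring

end DedekindAux

/-- The classical Dedekind-sum evaluation:
`(1/(4k)) · Σ_{j=1}^{k-1} csc²(πj/k) = (k²−1)/(12k)` for every integer `k ≥ 2`. -/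
theorem dedekind_csc_sum (k : ℕ) (hk : 2 ≤ k) :
    (1 / (4 * (k : ℝ))) * ∑ j ∈ Finset.Ico 1 k, ((Real.sin (Real.pi * j / k))⁻¹) ^ 2
      = ((k : ℝ) ^ 2 - 1) / (12 * k) := by
  have hkr : (k : ℝ) ≠ 0 := Nat.cast_ne_zero.mpr (by omega)
  have hsum : ∑ j ∈ Finset.Ico 1 k, ((Real.sin (Real.pi * j / k))⁻¹) ^ 2
      = ((k : ℝ) ^ 2 - 1) / 3 := by
    have h := DedekindAux.main_c k hk
    exact_mod_cast h
  rw [hsum, div_mul_div_comm, div_eq_div_iff (by positivity) (by positivity)]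
  ring
end

section
/- Let V be the space of smooth vector fields ξ on a manifold with boundary X such that ξx ∈ x²C^∞(X) and ξ restricted to ∂X is tangent to a given foliation F on ∂X, where x is a boundary defining function. Then V is a Lie subalgebra of the Lie algebra of all smooth vector fields on X, and moreover V is a C^∞(X)-module satisfying [ξ, fη] = f[ξ,η] + (ξf)η for all ξ, η ∈ V and f ∈ C^∞(X). -/
/-- Algebraic model of the foliated cusp vector fields `V_F(X)`.
Functions on `X` are modelled by a commutative ℝ-algebra `A`, vector fields by
derivations of `A`, the boundary by the quotient `A ⧸ (x)` for a boundary defining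
function `x`, and the (involutive) foliation distribution by a set `L` of derivations
of the boundary algebra closed under addition, module multiplication and bracket.
The set `V` of derivations `ξ` with `ξx ∈ x²A` whose boundary restriction lies in `L`
is then closed under addition, multiplication by functions and Lie bracket (so is a
Lie subalgebra and a `C^∞`-module), and the Leibniz rule
`[ξ, fη] = f[ξ,η] + (ξf)η` holds. -/
theorem foliatedCuspVectorFields_lieSubalgebra
    (A : Type*) [CommRing A] [Algebra ℝ A] (x : A)
    (L : Set (Derivation ℝ (A ⧸ Ideal.span {x}) (A ⧸ Ideal.span {x})))
    (hL_add : ∀ η₁ ∈ L, ∀ η₂ ∈ L, η₁ + η₂ ∈ L)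
    (hL_smul : ∀ (b : A ⧸ Ideal.span {x}), ∀ η ∈ L, b • η ∈ L)
    (hL_brk : ∀ η₁ ∈ L, ∀ η₂ ∈ L, ⁅η₁, η₂⁆ ∈ L) :
    ∀ V : Set (Derivation ℝ A A),
      V = {ξ : Derivation ℝ A A | ξ x ∈ Ideal.span {x ^ 2} ∧
        ∃ η ∈ L, ∀ a : A, η (Ideal.Quotient.mk (Ideal.span {x}) a)
          = Ideal.Quotient.mk (Ideal.span {x}) (ξ a)} →
      (∀ ξ ∈ V, ∀ ζ ∈ V, ξ + ζ ∈ V) ∧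
      (∀ f : A, ∀ ξ ∈ V, f • ξ ∈ V) ∧
      (∀ ξ ∈ V, ∀ ζ ∈ V, ⁅ξ, ζ⁆ ∈ V) ∧
      (∀ (ξ η : Derivation ℝ A A) (f : A), ⁅ξ, f • η⁆ = f • ⁅ξ, η⁆ + ξ f • η) := by
  intro V hV
  subst hV
  refine ⟨?_, ?_, ?_, ?_⟩
  · rintro ξ ⟨hx1, η₁, hη₁L, hη₁⟩ ζ ⟨hx2, η₂, hη₂L, hη₂⟩
    refine ⟨?_, η₁ + η₂, hL_add _ hη₁L _ hη₂L, ?_⟩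
    · simpa using Ideal.add_mem _ hx1 hx2
    · intro a
      simp [hη₁ a, hη₂ a]
  · rintro f ξ ⟨hx1, η₁, hη₁L, hη₁⟩
    refine ⟨?_, (Ideal.Quotient.mk (Ideal.span {x}) f) • η₁,
      hL_smul _ _ hη₁L, ?_⟩
    · simpa using Ideal.mul_mem_left _ f hx1
    · intro a
      simp [hη₁ a, ← map_mul]
  · rintro ξ ⟨hx1, η₁, hη₁L, hη₁⟩ ζ ⟨hx2, η₂, hη₂L, hη₂⟩
    refine ⟨?_, ⁅η₁, η₂⁆, hL_brk _ hη₁L _ hη₂L, ?_⟩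
    · rw [Ideal.mem_span_singleton] at hx1 hx2 ⊢
      obtain ⟨b, hb⟩ := hx1
      obtain ⟨c, hc⟩ := hx2
      rw [Derivation.commutator_apply, hb, hc]
      have h1 : ξ (x ^ 2) = x * (x ^ 2 * b) + x * (x ^ 2 * b) := by
        rw [pow_two, Derivation.leibniz, hb, smul_eq_mul]; ring
      have h2 : ζ (x ^ 2) = x * (x ^ 2 * c) + x * (x ^ 2 * c) := by
        rw [pow_two, Derivation.leibniz, hc, smul_eq_mul]; ring
      rw [Derivation.leibniz, Derivation.leibniz, h1, h2, smul_eq_mul,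
        smul_eq_mul, smul_eq_mul, smul_eq_mul]
      exact ⟨ξ c - ζ b, by ring⟩
    · intro a
      rw [Derivation.commutator_apply, Derivation.commutator_apply,
        hη₂ a, hη₁ _, hη₁ a, hη₂ _, map_sub]
  · intro ξ η f
    ext a
    simp only [Derivation.commutator_apply, Derivation.smul_apply,
      Derivation.leibniz, Derivation.add_apply, smul_eq_mul]
    ring
end

section
/- For every odd natural number k ≥ 3, the real number (k²−1)/(12k²) − (1/(4k²)) · Σ_{j=1}^{k²−1} csc(πj(1+k)/k²) · csc(πj(1−k)/k²) is an integer. -/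
open Finset Complex

-- (z-1) * Σ_{i<n} i z^i = (n-1) z^n - Σ_{i<n} z^i + 1, by induction
lemma key_sum (z : ℂ) (n : ℕ) :
    (z - 1) * ∑ i ∈ range n, (i : ℂ) * z ^ i
      = ((n : ℂ) - 1) * z ^ n - ∑ i ∈ range n, z ^ i + 1 := by
  induction n with
  | zero => simp
  | succ n ih =>
    rw [Finset.sum_range_succ, Finset.sum_range_succ, mul_add, ih]
    push_cast
    ring

lemma sum_cast_id (n : ℕ) : ∑ i ∈ range n, (i : ℂ) = (n * (n - 1)) / 2 := by
  induction n with
  | zero => simp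
  | succ n ih => rw [Finset.sum_range_succ, ih]; push_cast; ring

lemma sum_cast_sq (n : ℕ) : ∑ i ∈ range n, (i : ℂ)^2 = n * (n - 1) * (2*n - 1) / 6 := by
  induction n with
  | zero => simp
  | succ n ih => rw [Finset.sum_range_succ, ih]; push_cast; ring

lemma csc_sq_sum (k : ℕ) (hk : 0 < k) :
    ∑ m ∈ Finset.Ico 1 k, ((Real.sin (Real.pi * m / k))⁻¹)^2
      = ((k:ℝ)^2 - 1) / 3 := by
  have hk0 : (k : ℂ) ≠ 0 := Nat.cast_ne_zero.2 hk.ne'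
  set ζ : ℂ := Complex.exp (2 * Real.pi * I / k) with hζdef
  have hprim : IsPrimitiveRoot ζ k := Complex.isPrimitiveRoot_exp k hk.ne'
  have hζk : ζ ^ k = 1 := hprim.pow_eq_one
  -- orthogonality
  have horth : ∀ t : ℕ, ∑ m ∈ range k, (ζ ^ t) ^ m = if (k:ℕ) ∣ t then (k:ℂ) else 0 := by
    intro t
    by_cases hd : (k:ℕ) ∣ t
    · obtain ⟨c, rfl⟩ := hd
      simp [pow_mul, hζk, one_pow]
    · have hne : ζ ^ t ≠ 1 := fun h => hd (hprim.dvd_of_pow_eq_one t h)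
      rw [if_neg hd, geom_sum_eq hne]
      rw [← pow_mul, mul_comm t k, pow_mul, hζk, one_pow, sub_self, zero_div]
  -- for z a nontrivial k-th root: Σ i z^i = k/(z-1)
  have hinv : ∀ m ∈ Finset.Ico 1 k,
      ∑ i ∈ range k, (i : ℂ) * (ζ^m) ^ i = (k:ℂ) * (ζ^m - 1)⁻¹ := by
    intro m hm
    rw [Finset.mem_Ico] at hm
    have hne : ζ ^ m ≠ 1 := by
      intro h
      have h2 := Nat.le_of_dvd (by omega) (hprim.dvd_of_pow_eq_one m h)
      omega
    have hz1 : ζ ^ m - 1 ≠ 0 := sub_ne_zero.2 hne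
    have h1 := key_sum (ζ ^ m) k
    rw [← pow_mul, mul_comm m k, pow_mul, hζk, one_pow, mul_one] at h1
    have hkm : ¬ (k ∣ m) := by
      intro hd; have := Nat.le_of_dvd (by omega) hd; omega
    have h2 : ∑ i ∈ range k, (ζ ^ m) ^ i = 0 := by
      have := horth m; rw [if_neg hkm] at this; exact this
    rw [h2] at h1
    rw [eq_comm, mul_inv_eq_iff_eq_mul₀ hz1, mul_comm _ (ζ^m - 1), h1]
    ring
  -- bridge between real csc² and complex roots of unity
  have hbridge : ∀ m ∈ Finset.Ico 1 k,
      (((Real.sin (Real.pi * m / k))⁻¹^2 : ℝ) : ℂ)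
        = -4 * ζ^m * ((ζ^m - 1)⁻¹)^2 := by
    intro m hm
    rw [Finset.mem_Ico] at hm
    set θ : ℝ := Real.pi * m / k with hθdef
    have hθpos : 0 < θ := by
      apply div_pos (mul_pos Real.pi_pos (by exact_mod_cast hm.1)) (by exact_mod_cast hk)
    have hθlt : θ < Real.pi := by
      rw [hθdef, div_lt_iff₀ (by exact_mod_cast hk)]
      have : (m:ℝ) < (k:ℝ) := by exact_mod_cast hm.2
      nlinarith [Real.pi_pos]
    have hsin : Real.sin θ ≠ 0 := (Real.sin_pos_of_pos_of_lt_pi hθpos hθlt).ne'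
    have hζm : ζ^m = Complex.exp (2*(θ:ℂ)*I) := by
      rw [hζdef, ← Complex.exp_nat_mul]
      congr 1
      rw [hθdef]
      push_cast
      field_simp
    have e1 : Complex.exp ((θ:ℂ)*I) * Complex.exp (-(θ:ℂ)*I) = 1 := by
      rw [← Complex.exp_add, show ((θ:ℂ)*I + -(θ:ℂ)*I) = 0 by ring, Complex.exp_zero]
    have e2 : Complex.exp ((θ:ℂ)*I)^2 = Complex.exp (2*(θ:ℂ)*I) := by
      rw [sq, ← Complex.exp_add]
      congr 1
      ring
    have key : ζ^m - 1 = Complex.exp ((θ:ℂ)*I) * (2*I*Complex.sin (θ:ℂ)) := by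
      rw [hζm, Complex.sin]
      linear_combination (-(I^2)) * e1 + (I^2) * e2
        + (Complex.exp (2*(θ:ℂ)*I) - 1) * Complex.I_sq
    have hsq : (ζ^m - 1)^2 = -4 * ζ^m * ((Real.sin θ : ℝ) : ℂ)^2 := by
      rw [key, mul_pow, e2, ← hζm, mul_pow, mul_pow, Complex.I_sq, ← Complex.ofReal_sin]
      ring
    have hζmne : ζ^m ≠ 0 := by
      rw [hζm]; exact Complex.exp_ne_zero _
    have hsinC : ((Real.sin θ : ℝ) : ℂ) ≠ 0 := by exact_mod_cast hsin
    push_cast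
    simp only [inv_pow]
    rw [hsq]
    have hne4 : (-4:ℂ) * ζ^m ≠ 0 := mul_ne_zero (by norm_num) hζmne
    rw [show (-4*ζ^m*((Real.sin θ : ℝ):ℂ)^2 : ℂ) = (-4*ζ^m)*((Real.sin θ : ℝ):ℂ)^2
        by ring, mul_inv, ← mul_assoc, mul_inv_cancel₀ hne4, one_mul, Complex.ofReal_sin]
  -- cast the sum to ℂ
  have hcast : (((∑ m ∈ Finset.Ico 1 k, ((Real.sin (Real.pi * m / k))⁻¹)^2 : ℝ)) : ℂ)
      = ∑ m ∈ Finset.Ico 1 k, (-4 * ζ^m * ((ζ^m - 1)⁻¹)^2) := by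
    push_cast
    refine Finset.sum_congr rfl ?_
    intro m hm
    have := hbridge m hm
    push_cast at this
    exact this
  -- rewrite using hinv
  have hstep : ∀ m ∈ Finset.Ico 1 k,
      -4 * ζ^m * ((ζ^m - 1)⁻¹)^2
        = (-4) * ((k:ℂ))⁻¹^2 * (ζ^m * (∑ i ∈ range k, (i : ℂ) * (ζ^m) ^ i)^2) := by
    intro m hm
    rw [hinv m hm, mul_pow]
    have hkk : ((k:ℂ))⁻¹^2 * (k:ℂ)^2 = 1 := by
      rw [← mul_pow, inv_mul_cancel₀ hk0, one_pow]
    linear_combination (4 * ζ^m * ((ζ^m - 1)⁻¹)^2) * hkk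
  rw [Finset.sum_congr rfl hstep, ← Finset.mul_sum] at hcast
  -- the polynomial sum
  set H : ℕ → ℂ := fun m => ζ^m * (∑ i ∈ range k, (i : ℂ) * (ζ^m) ^ i)^2 with hH
  have hrange : ∑ m ∈ range k, H m
      = (k:ℂ) * ((k:ℂ) * ((k:ℂ)-1) * ((k:ℂ)-2) / 6) := by
    have expand : ∀ m, H m = ∑ i ∈ range k, ∑ j ∈ range k,
        (i:ℂ) * (j:ℂ) * (ζ^(i+j+1))^m := by
      intro m
      simp only [hH]
      rw [sq, Finset.sum_mul_sum, Finset.mul_sum]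
      refine Finset.sum_congr rfl fun i _ => ?_
      rw [Finset.mul_sum]
      refine Finset.sum_congr rfl fun j _ => ?_
      rw [← pow_mul, ← pow_mul, ← pow_mul,
        show (i+j+1)*m = m*i + (m*j + m) by ring, pow_add, pow_add]
      ring
    rw [Finset.sum_congr rfl fun m _ => expand m, Finset.sum_comm]
    have hswap : ∀ i ∈ range k,
        ∑ m ∈ range k, ∑ j ∈ range k, (i:ℂ)*(j:ℂ)*(ζ^(i+j+1))^m
          = ∑ j ∈ range k, (i:ℂ)*(j:ℂ)*(if k ∣ (i+j+1) then (k:ℂ) else 0) := by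
      intro i _
      rw [Finset.sum_comm]
      refine Finset.sum_congr rfl fun j _ => ?_
      rw [← Finset.mul_sum, horth (i+j+1)]
    rw [Finset.sum_congr rfl hswap]
    have hin : ∀ i ∈ range k,
        ∑ j ∈ range k, (i:ℂ)*(j:ℂ)*(if k ∣ (i+j+1) then (k:ℂ) else 0)
          = (i:ℂ) * ((k:ℂ)-1-(i:ℂ)) * (k:ℂ) := by
      intro i hi
      rw [Finset.mem_range] at hi
      rw [Finset.sum_eq_single (k-1-i)]
      · have h1 : i+(k-1-i)+1 = k := by omega
        rw [if_pos (show k ∣ i+(k-1-i)+1 by rw [h1]), Nat.cast_sub (by omega : i ≤ k - 1),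
          Nat.cast_sub (by omega : 1 ≤ k), Nat.cast_one]
      · intro j hjmem hjne
        rw [Finset.mem_range] at hjmem
        rw [if_neg, mul_zero]
        intro hd
        obtain ⟨c, hc⟩ := hd
        have hc1 : c = 1 := by
          by_contra hne2
          rcases Nat.eq_zero_or_pos c with rfl|hcp
          · omega
          · have h2 : 2 ≤ c := by omega
            have h3 : k*2 ≤ k*c := Nat.mul_le_mul_left k h2
            omega
        subst hc1
        omega
      · intro h
        exact absurd (Finset.mem_range.2 (by omega)) h
    rw [Finset.sum_congr rfl hin]
    have h1 : ∑ i ∈ range k, ((i:ℂ)*((k:ℂ)-1-(i:ℂ))*(k:ℂ))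
        = (k:ℂ)*((k:ℂ)-1)*(∑ i ∈ range k, (i:ℂ)) - (k:ℂ)*(∑ i ∈ range k, (i:ℂ)^2) := by
      rw [Finset.mul_sum, Finset.mul_sum, ← Finset.sum_sub_distrib]
      exact Finset.sum_congr rfl fun i _ => by ring
    rw [h1, sum_cast_id, sum_cast_sq]
    ring
  have hH0 : H 0 = (((k:ℂ) * ((k:ℂ)-1))/2)^2 := by
    simp only [hH, pow_zero, one_pow, mul_one, one_mul, sum_cast_id]
  have hIco : ∑ m ∈ Finset.Ico 1 k, H m
      = (k:ℂ) * ((k:ℂ) * ((k:ℂ)-1) * ((k:ℂ)-2) / 6) - (((k:ℂ) * ((k:ℂ)-1))/2)^2 := by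
    rw [← hrange, Finset.range_eq_Ico, Finset.sum_eq_sum_Ico_succ_bot hk, hH0]
    ring
  rw [hIco] at hcast
  have hfin : (((∑ m ∈ Finset.Ico 1 k, ((Real.sin (Real.pi * m / k))⁻¹)^2 : ℝ)) : ℂ)
      = ((k:ℂ)^2 - 1)/3 := by
    rw [hcast]
    field_simp
    ring
  exact_mod_cast hfin

-- cotangent is π-periodic (as a cos/sin quotient, even through singularities)
lemma cot_period (x : ℝ) (n : ℤ) :
    Real.cos (x + n * Real.pi) / Real.sin (x + n * Real.pi)
      = Real.cos x / Real.sin x := by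
  rw [Real.sin_add_int_mul_pi, Real.cos_add_int_mul_pi]
  rcases Int.even_or_odd n with he | ho
  · rw [he.neg_one_zpow]; simp
  · rw [Odd.neg_one_zpow ho]
    rw [neg_one_mul, neg_one_mul, neg_div_neg_eq]

lemma cot_period_nat (x : ℝ) (n : ℕ) :
    Real.cos (x + n * Real.pi) / Real.sin (x + n * Real.pi)
      = Real.cos x / Real.sin x := by
  have h := cot_period x (n:ℤ)
  push_cast at h
  exact h

-- partial fractions for csc·csc
lemma csc_mul_csc (A B : ℝ) (hA : Real.sin A ≠ 0) (hB : Real.sin B ≠ 0)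
    (hAB : Real.sin (A - B) ≠ 0) :
    (Real.sin A)⁻¹ * (Real.sin B)⁻¹
      = (Real.cos B / Real.sin B - Real.cos A / Real.sin A) / Real.sin (A - B) := by
  rw [eq_div_iff hAB, Real.sin_sub]
  field_simp

-- sin(πx/p) ≠ 0 for p ∤ x
lemma sin_ne_zero_of_not_dvd (p : ℕ) (hp : 0 < p) (x : ℤ) (hx : ¬ ((p:ℤ) ∣ x)) :
    Real.sin (Real.pi * x / p) ≠ 0 := by
  intro h
  rw [Real.sin_eq_zero_iff] at h
  obtain ⟨n, hn⟩ := h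
  apply hx
  have hp' : (p:ℝ) ≠ 0 := Nat.cast_ne_zero.2 hp.ne'
  rw [eq_div_iff hp'] at hn
  have h3 : (x:ℝ) = (p:ℝ) * n := by
    have h2 : Real.pi * ((p:ℝ) * n) = Real.pi * (x:ℝ) := by linarith [hn]
    have := mul_left_cancel₀ Real.pi_ne_zero h2
    linarith [this]
  exact ⟨n, by exact_mod_cast h3⟩

-- shifting mod k is a bijection of range k
lemma sum_mod_shift (F : ℕ → ℝ) (k c : ℕ) (hk : 0 < k) (hc : c ≤ k) :
    ∑ m ∈ range k, F ((m + c) % k) = ∑ m ∈ range k, F m := by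
  apply Finset.sum_nbij' (i := fun m => (m + c) % k) (j := fun m => (m + (k - c)) % k)
  · intro a ha
    exact Finset.mem_range.2 (Nat.mod_lt _ hk)
  · intro a ha
    exact Finset.mem_range.2 (Nat.mod_lt _ hk)
  · intro a ha
    rw [Finset.mem_range] at ha
    rw [Nat.mod_add_mod, show a + c + (k - c) = a + k by omega, Nat.add_mod_right,
      Nat.mod_eq_of_lt ha]
  · intro a ha
    rw [Finset.mem_range] at ha
    rw [Nat.mod_add_mod, show a + (k - c) + c = a + k by omega, Nat.add_mod_right,
      Nat.mod_eq_of_lt ha]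
  · intro a ha
    rfl

-- reindexing a sum over range (k*k)
lemma sum_sq_reindex (f : ℕ → ℝ) (k : ℕ) (hk : 0 < k) :
    ∑ j ∈ range (k*k), f j = ∑ r ∈ range k, ∑ m ∈ range k, f (r + k*m) := by
  rw [← Finset.sum_product']
  apply Finset.sum_nbij' (i := fun j => (j % k, j / k)) (j := fun p => p.1 + k * p.2)
  · intro a ha
    rw [Finset.mem_range] at ha
    refine Finset.mem_product.2 ⟨Finset.mem_range.2 (Nat.mod_lt _ hk), Finset.mem_range.2 ?_⟩
    exact Nat.div_lt_of_lt_mul (by omega)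
  · intro p hp
    rw [Finset.mem_product, Finset.mem_range, Finset.mem_range] at hp
    refine Finset.mem_range.2 ?_
    rcases hp with ⟨h1, h2⟩
    calc p.1 + k * p.2 < k + k * p.2 := by omega
    _ ≤ k + k * (k-1) := by
        have : p.2 ≤ k - 1 := by omega
        exact Nat.add_le_add_left (Nat.mul_le_mul_left k this) k
    _ = k * k := by
        have h3 : k * (k-1) = k*k - k := by rw [Nat.mul_sub, mul_one]
        have h4 : k ≤ k*k := Nat.le_mul_of_pos_left k hk
        omega
  · intro a ha
    simp [Nat.mod_add_div]
  · intro p hp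
    rw [Finset.mem_product, Finset.mem_range, Finset.mem_range] at hp
    have h1 : (p.1 + k * p.2) % k = p.1 := by
      rw [Nat.add_mul_mod_self_left, Nat.mod_eq_of_lt hp.1]
    have h2 : (p.1 + k * p.2) / k = p.2 := by
      rw [Nat.add_mul_div_left _ _ hk, Nat.div_eq_of_lt hp.1, zero_add]
    simp [h1, h2]
  · intro a ha
    simp [Nat.mod_add_div]

-- the inner sum over a nonzero residue class r mod k vanishes
lemma inner_sum_zero (k r : ℕ) (hkodd : Odd k) (hr1 : 1 ≤ r) (hrk : r < k) :
    ∑ m ∈ range k,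
      (Real.sin (Real.pi * ((r + k*m : ℕ):ℝ) * (1 + (k:ℝ)) / (k:ℝ)^2))⁻¹ *
        (Real.sin (Real.pi * ((r + k*m : ℕ):ℝ) * (1 - (k:ℝ)) / (k:ℝ)^2))⁻¹ = 0 := by
  have hk0 : 0 < k := by omega
  have hkR : (k:ℝ) ≠ 0 := Nat.cast_ne_zero.2 hk0.ne'
  have hk2R : ((k^2 : ℕ):ℝ) ≠ 0 := Nat.cast_ne_zero.2 (by positivity)
  set u : ℕ := k - r with hu
  have huk : r + u = k := by omega
  -- the common denominator sin(2πr/k) ≠ 0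
  have hs : Real.sin (2*Real.pi*r/k) ≠ 0 := by
    have h2r : ¬ ((k:ℤ) ∣ ((2*r : ℕ):ℤ)) := by
      rw [Int.natCast_dvd_natCast]
      intro hd
      have hco : Nat.Coprime k 2 := hkodd.coprime_two_right
      have := (Nat.Coprime.dvd_of_dvd_mul_left hco hd)
      have := Nat.le_of_dvd (by omega) this
      omega
    have := sin_ne_zero_of_not_dvd k hk0 ((2*r : ℕ):ℤ) h2r
    have harg : Real.pi * ((2*r : ℕ):ℤ ) / k = 2*Real.pi*r/k := by push_cast; ring
    rwa [harg] at this
  -- the cotangent-type function on residues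
  set g : ℕ → ℝ := fun t =>
    Real.cos (Real.pi * ((r:ℝ) + k*t)/(k:ℝ)^2) / Real.sin (Real.pi * ((r:ℝ) + k*t)/(k:ℝ)^2)
    with hg
  have hterm : ∀ m ∈ range k,
      (Real.sin (Real.pi * ((r + k*m : ℕ):ℝ) * (1 + (k:ℝ)) / (k:ℝ)^2))⁻¹ *
        (Real.sin (Real.pi * ((r + k*m : ℕ):ℝ) * (1 - (k:ℝ)) / (k:ℝ)^2))⁻¹
      = (g ((m + u) % k) - g ((m + r) % k)) / Real.sin (2*Real.pi*r/k) := by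
    intro m hm
    rw [Finset.mem_range] at hm
    set j : ℕ := r + k*m with hj
    set A : ℝ := Real.pi * (j:ℝ) * (1 + (k:ℝ)) / (k:ℝ)^2 with hA
    set B : ℝ := Real.pi * (j:ℝ) * (1 - (k:ℝ)) / (k:ℝ)^2 with hB
    -- nonvanishing of sin A
    have hdvdk2 : (k:ℕ) ∣ k^2 := dvd_pow_self k two_ne_zero
    have hAne : Real.sin A ≠ 0 := by
      have hnd : ¬ (((k^2:ℕ):ℤ) ∣ ((j*(1+k) : ℕ):ℤ)) := by
        rw [Int.natCast_dvd_natCast]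
        intro hd
        have h1 : k ∣ j*(1+k) := dvd_trans hdvdk2 hd
        have hco : Nat.Coprime k (1+k) := by
          have : Nat.gcd k (1+k) = Nat.gcd k 1 := Nat.gcd_add_self_right k 1
          simpa [Nat.Coprime] using this
        have h2 : k ∣ j := hco.dvd_of_dvd_mul_right h1
        rw [hj, add_comm] at h2
        have h3 : k ∣ r := (Nat.dvd_add_right (Dvd.intro m rfl)).mp h2
        have := Nat.le_of_dvd (by omega) h3
        omega
      have := sin_ne_zero_of_not_dvd (k^2) (by positivity) _ hnd
      have harg : Real.pi * ((j*(1+k) : ℕ):ℤ) / ((k^2:ℕ):ℝ) = A := by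
        rw [hA]; push_cast; ring
      rwa [harg] at this
    -- nonvanishing of sin B
    have hBne : Real.sin B ≠ 0 := by
      have hnd : ¬ (((k^2:ℕ):ℤ) ∣ ((j:ℤ) * (1 - (k:ℤ)))) := by
        intro hd
        rw [show (j:ℤ)*(1-(k:ℤ)) = -(((j*(k-1) : ℕ):ℤ)) by
          push_cast [Nat.cast_sub (show 1 ≤ k by omega)]; ring, dvd_neg,
          Int.natCast_dvd_natCast] at hd
        have h1 : k ∣ j*(k-1) := dvd_trans hdvdk2 hd
        have hco : Nat.Coprime k (k-1) := by
          have h4 : Nat.gcd ((k-1)+1) (k-1) = Nat.gcd 1 (k-1) := Nat.gcd_self_add_left (k-1) 1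
          rw [show (k-1)+1 = k by omega] at h4
          simpa [Nat.Coprime, Nat.gcd_comm] using h4
        have h2 : k ∣ j := hco.dvd_of_dvd_mul_right h1
        rw [hj, add_comm] at h2
        have h3 : k ∣ r := (Nat.dvd_add_right (Dvd.intro m rfl)).mp h2
        have := Nat.le_of_dvd (by omega) h3
        omega
      have := sin_ne_zero_of_not_dvd (k^2) (by positivity) _ hnd
      have harg : Real.pi * ((j:ℤ) * (1 - (k:ℤ)) : ℤ) / ((k^2:ℕ):ℝ) = B := by
        rw [hB]; push_cast; ring
      rwa [harg] at this
    -- sin (A - B) = sin (2πr/k)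
    have hABval : Real.sin (A - B) = Real.sin (2*Real.pi*r/k) := by
      have hABeq : A - B = 2*Real.pi*r/k + ((2*m:ℕ):ℤ)*Real.pi := by
        rw [hA, hB, hj]; push_cast; field_simp; ring
      rw [hABeq, Real.sin_add_int_mul_pi,
        (by exact ⟨(m:ℤ), by push_cast; ring⟩ : Even ((2*m:ℕ):ℤ)).neg_one_zpow, one_mul]
    have hABne : Real.sin (A - B) ≠ 0 := by rw [hABval]; exact hs
    rw [csc_mul_csc A B hAne hBne hABne, hABval]
    congr 1
    -- identify cot A with g ((m+r)%k)
    set ta : ℕ := (m+r) % k with hta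
    set qa : ℕ := (m+r) / k with hqa
    set tb : ℕ := (m+u) % k with htb
    set qb : ℕ := (m+u) / k with hqb
    have hcotA : Real.cos A / Real.sin A = g ta := by
      have hdm : k * qa + ta = m + r := Nat.div_add_mod (m+r) k
      have hnatA : j*(1+k) = (r + k*ta) + k*k*(m + qa) := by
        calc j*(1+k) = r + k*(m+r) + k*k*m := by rw [hj]; ring
        _ = r + k*(k*qa + ta) + k*k*m := by rw [hdm]
        _ = (r + k*ta) + k*k*(m + qa) := by ring
      have hc : ((r:ℝ) + k*m)*(1+(k:ℝ))
          = ((r:ℝ) + k*ta) + (k:ℝ)*k*((m:ℝ) + qa) := by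
        exact_mod_cast hnatA
      have hAeq : A = Real.pi * ((r:ℝ) + k*ta)/(k:ℝ)^2
          + ((m + qa : ℕ):ℝ)*Real.pi := by
        rw [hA, hj]
        push_cast
        field_simp
        linear_combination Real.pi * hc + (Real.pi - 1) * (k:ℝ) * (by exact_mod_cast hdm : (k:ℝ)*qa + ta = m + r)
      rw [hAeq, cot_period_nat]
    -- identify cot B with g ((m+u)%k)
    have hcotB : Real.cos B / Real.sin B = g tb := by
      have hdm : k * qb + tb = m + u := Nat.div_add_mod (m+u) k
      have hqR : (k:ℝ)*qb + tb = (m:ℝ) + u := by exact_mod_cast hdm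
      have huR : (r:ℝ) + u = k := by exact_mod_cast huk
      have hc : ((r:ℝ) + k*m)*(1-(k:ℝ))
          = ((r:ℝ) + k*tb) + (k:ℝ)*k*((qb:ℝ) - 1 - m) := by
        linear_combination (-(k:ℝ))*hqR + (-(k:ℝ))*huR
      have hBeq : B = Real.pi * ((r:ℝ) + k*tb)/(k:ℝ)^2
          + ((((qb:ℤ) - 1 - (m:ℤ)):ℤ):ℝ)*Real.pi := by
        rw [hB, hj]
        push_cast
        field_simp
        linear_combination Real.pi * hc + (Real.pi - 1) * (k:ℝ) * hqR + (Real.pi - 1) * (k:ℝ) * huR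
      rw [hBeq, cot_period]
    rw [hcotA, hcotB]
  rw [Finset.sum_congr rfl hterm, ← Finset.sum_div, Finset.sum_sub_distrib,
    sum_mod_shift g k u hk0 (by omega), sum_mod_shift g k r hk0 (by omega),
    sub_self, zero_div]

-- the r = 0 residue class gives the classical cosecant-squared sum
lemma diag_sum (k : ℕ) (hk0 : 0 < k) :
    ∑ m ∈ range k,
      (Real.sin (Real.pi * ((0 + k*m : ℕ):ℝ) * (1 + (k:ℝ)) / (k:ℝ)^2))⁻¹ *
        (Real.sin (Real.pi * ((0 + k*m : ℕ):ℝ) * (1 - (k:ℝ)) / (k:ℝ)^2))⁻¹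
      = ((k:ℝ)^2 - 1)/3 := by
  have hkR : (k:ℝ) ≠ 0 := Nat.cast_ne_zero.2 hk0.ne'
  rw [Finset.range_eq_Ico, Finset.sum_eq_sum_Ico_succ_bot hk0]
  have hzero : (Real.sin (Real.pi * ((0 + k*0 : ℕ):ℝ) * (1 + (k:ℝ)) / (k:ℝ)^2))⁻¹ *
      (Real.sin (Real.pi * ((0 + k*0 : ℕ):ℝ) * (1 - (k:ℝ)) / (k:ℝ)^2))⁻¹ = 0 := by
    norm_num
  rw [hzero, zero_add]
  have hcongr : ∀ m ∈ Finset.Ico 1 k,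
      (Real.sin (Real.pi * ((0 + k*m : ℕ):ℝ) * (1 + (k:ℝ)) / (k:ℝ)^2))⁻¹ *
        (Real.sin (Real.pi * ((0 + k*m : ℕ):ℝ) * (1 - (k:ℝ)) / (k:ℝ)^2))⁻¹
      = ((Real.sin (Real.pi * m / k))⁻¹)^2 := by
    intro m hm
    rw [Finset.mem_Ico] at hm
    have h1 : Real.sin (Real.pi * ((0 + k*m : ℕ):ℝ) * (1 + (k:ℝ)) / (k:ℝ)^2)
        = (-1:ℝ)^((m:ℤ)) * Real.sin (Real.pi * m / k) := by
      rw [show Real.pi * ((0 + k*m : ℕ):ℝ) * (1 + (k:ℝ)) / (k:ℝ)^2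
          = Real.pi * m / k + ((m:ℤ):ℝ)*Real.pi by push_cast; field_simp; ring]
      rw [Real.sin_add_int_mul_pi]
    have h2 : Real.sin (Real.pi * ((0 + k*m : ℕ):ℝ) * (1 - (k:ℝ)) / (k:ℝ)^2)
        = (-1:ℝ)^(-(m:ℤ)) * Real.sin (Real.pi * m / k) := by
      rw [show Real.pi * ((0 + k*m : ℕ):ℝ) * (1 - (k:ℝ)) / (k:ℝ)^2
          = Real.pi * m / k + (Int.cast (-(m:ℤ)) : ℝ)*Real.pi by push_cast; field_simp; ring]
      rw [Real.sin_add_int_mul_pi]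
    rw [h1, h2, mul_inv, mul_inv]
    have heq : ((-1:ℝ)^((m:ℤ)))⁻¹ * ((-1:ℝ)^(-(m:ℤ)))⁻¹ = 1 := by
      rw [← zpow_neg, ← zpow_neg, ← zpow_add₀ (by norm_num : (-1:ℝ) ≠ 0)]
      norm_num
    have : ((Real.sin (Real.pi * m / k))⁻¹)^2
        = ((-1:ℝ)^((m:ℤ)))⁻¹ * ((-1:ℝ)^(-(m:ℤ)))⁻¹ * ((Real.sin (Real.pi * m / k))⁻¹)^2 := by
      rw [heq, one_mul]
    rw [this]
    ring
  rw [Finset.sum_congr rfl hcongr, csc_sq_sum k hk0]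

/-- Integrality coming from the index of a Fredholm perturbation of the Dirac
operator on a ℤ_k-quotient of a multi-Taub-NUT gravitational instanton: for `k`
odd, `(k²−1)/(12k²) − (1/(4k²)) Σ_{j=1}^{k²−1} csc(πj(1+k)/k²) csc(πj(1−k)/k²)`
is an integer. -/
theorem rho_invariant_integrality (k : ℕ) (hk : Odd k) (hk3 : 3 ≤ k) :
    ∃ n : ℤ,
      ((k : ℝ) ^ 2 - 1) / (12 * (k : ℝ) ^ 2) -
        (1 / (4 * (k : ℝ) ^ 2)) *
          ∑ j ∈ Finset.Ico 1 (k ^ 2),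
            (Real.sin (Real.pi * (j : ℝ) * (1 + (k : ℝ)) / (k : ℝ) ^ 2))⁻¹ *
              (Real.sin (Real.pi * (j : ℝ) * (1 - (k : ℝ)) / (k : ℝ) ^ 2))⁻¹
        = (n : ℝ) := by
  refine ⟨0, ?_⟩
  have hk0 : 0 < k := by omega
  have hkR : (k:ℝ) ≠ 0 := Nat.cast_ne_zero.2 hk0.ne'
  have hsum : ∑ j ∈ Finset.Ico 1 (k ^ 2),
      (Real.sin (Real.pi * (j : ℝ) * (1 + (k : ℝ)) / (k : ℝ) ^ 2))⁻¹ *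
        (Real.sin (Real.pi * (j : ℝ) * (1 - (k : ℝ)) / (k : ℝ) ^ 2))⁻¹
      = ((k:ℝ)^2 - 1)/3 := by
    have h0 : ∑ j ∈ Finset.range (k ^ 2),
        (Real.sin (Real.pi * (j : ℝ) * (1 + (k : ℝ)) / (k : ℝ) ^ 2))⁻¹ *
          (Real.sin (Real.pi * (j : ℝ) * (1 - (k : ℝ)) / (k : ℝ) ^ 2))⁻¹
        = ∑ j ∈ Finset.Ico 1 (k ^ 2),
        (Real.sin (Real.pi * (j : ℝ) * (1 + (k : ℝ)) / (k : ℝ) ^ 2))⁻¹ *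
          (Real.sin (Real.pi * (j : ℝ) * (1 - (k : ℝ)) / (k : ℝ) ^ 2))⁻¹ := by
      rw [Finset.range_eq_Ico, Finset.sum_eq_sum_Ico_succ_bot (by positivity : 0 < k^2)]
      norm_num
    rw [← h0, show k^2 = k*k from sq k,
      sum_sq_reindex (fun j => (Real.sin (Real.pi * (j : ℝ) * (1 + (k : ℝ)) / (k : ℝ) ^ 2))⁻¹ *
        (Real.sin (Real.pi * (j : ℝ) * (1 - (k : ℝ)) / (k : ℝ) ^ 2))⁻¹) k hk0,
      Finset.range_eq_Ico, Finset.sum_eq_sum_Ico_succ_bot hk0]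
    simp only [← Finset.range_eq_Ico]
    rw [show (0:ℕ)+1 = 1 by rfl]
    have hz : ∑ r ∈ Finset.Ico 1 k, ∑ m ∈ Finset.range k,
        (Real.sin (Real.pi * ((r + k*m : ℕ):ℝ) * (1 + (k:ℝ)) / (k:ℝ)^2))⁻¹ *
          (Real.sin (Real.pi * ((r + k*m : ℕ):ℝ) * (1 - (k:ℝ)) / (k:ℝ)^2))⁻¹ = 0 := by
      refine Finset.sum_eq_zero fun r hr => ?_
      rw [Finset.mem_Ico] at hr
      exact inner_sum_zero k r hk hr.1 hr.2
    rw [hz, diag_sum k hk0, add_zero]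
  rw [hsum]
  push_cast
  field_simp
  ring
end
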